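/- Let q ≥ 1 and let f: ℝⁿ → ℝ be q-times continuously differentiable with ‖D^q f(x) − D^q f(y)‖ ≤ (q−1)! L_h ‖x−y‖ for all x, y. Let x, s ∈ ℝⁿ with s ≠ 0 and let λ > 0 satisfy T_q(x,0) − T_q(x,s) ≥ (λ/(q+1)) ‖s‖^{q+1}. Then | 1 − ( f(x) − f(x+s) ) / ( T_q(x,0) − T_q(x,s) ) | ≤ (q+1) L_h / (q λ). -/

import Mathlib

/- Taylor's theorem of order `q` with a `K`-Lipschitz `q`-th derivative: the Lagrange form of
order `q - 1` leaves `D^q f(x + ξ s)[s^q] / q!`, and subtracting the last Taylor term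
`D^q f(x)[s^q] / q!` leaves a difference of `q`-th derivatives at distance `ξ ‖s‖ ≤ ‖s‖`, so the
remainder is at most `K ‖s‖^(q+1) / q!`. With `K = (q-1)! L_h` this is `L_h ‖s‖^(q+1) / q`, while
the model decrease is at least `λ ‖s‖^(q+1) / (q+1)`. -/

open scoped BigOperators

/-- The `q`-th order Taylor polynomial of `f` at `x`:
`T_q(x,s) = ∑_{i=0}^{q} (1/i!) Dⁱf(x)[s,…,s]`. -/
noncomputable def taylorPoly {n : ℕ} (q : ℕ) (f : EuclideanSpace ℝ (Fin n) → ℝ)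
    (x s : EuclideanSpace ℝ (Fin n)) : ℝ :=
  ∑ i ∈ Finset.range (q + 1),
    (1 / (Nat.factorial i) : ℝ) * iteratedFDeriv ℝ i f x (fun _ => s)

open Set Nat Finset

theorem abs_sub_taylor_le_of_abs_iteratedDeriv_sub_le {g : ℝ → ℝ} {m : ℕ} {C : ℝ}
    (hg : ContDiff ℝ (m + 1) g)
    (hC : ∀ t ∈ Ioo (0 : ℝ) 1, |iteratedDeriv (m + 1) g t - iteratedDeriv (m + 1) g 0| ≤ C) :
    |g 1 - ∑ i ∈ range (m + 2), iteratedDeriv i g 0 / i !| ≤ C / (m + 1)! := by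
  obtain ⟨ξ, hξ, hlag⟩ :=
    taylor_mean_remainder_lagrange_iteratedDeriv (x₀ := 0) (x := 1) zero_ne_one hg.contDiffOn
  have htaylor : taylorWithinEval g m (uIcc 0 1) 0 1
      = ∑ i ∈ range (m + 1), iteratedDeriv i g 0 / i ! := by
    rw [taylor_within_apply]
    refine sum_congr rfl fun i hi => ?_
    have hi' : (i : WithTop ℕ∞) ≤ m + 1 := by exact_mod_cast (mem_range.mp hi).le
    rw [iteratedDerivWithin_eq_iteratedDeriv (uniqueDiffOn_uIcc zero_ne_one)
      (hg.of_le hi').contDiffAt left_mem_uIcc]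
    simp [div_eq_inv_mul]
  have hremainder : g 1 - ∑ i ∈ range (m + 2), iteratedDeriv i g 0 / i !
      = (iteratedDeriv (m + 1) g ξ - iteratedDeriv (m + 1) g 0) / (m + 1)! := by
    rw [sum_range_succ, ← htaylor, ← sub_sub, hlag]
    ring
  rw [uIoo_of_le zero_le_one] at hξ
  rw [hremainder, abs_div, abs_of_pos (by positivity : (0 : ℝ) < (m + 1)!)]
  exact div_le_div_of_nonneg_right (hC ξ hξ) (by positivity)

section

variable {E F : Type*} [NormedAddCommGroup E] [NormedSpace ℝ E]
  [NormedAddCommGroup F] [NormedSpace ℝ F]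

theorem iteratedDeriv_comp_add_smul {N : WithTop ℕ∞} {f : E → F} (hf : ContDiff ℝ N f)
    (x s : E) {i : ℕ} (hi : i ≤ N) (t : ℝ) :
    iteratedDeriv i (fun t : ℝ => f (x + t • s)) t
      = iteratedFDeriv ℝ i f (x + t • s) (fun _ => s) := by
  have hshift : ContDiff ℝ N (fun y => f (x + y)) := hf.comp (contDiff_const.add contDiff_id)
  have hcomp : (fun t : ℝ => f (x + t • s))
      = (fun y => f (x + y)) ∘ ContinuousLinearMap.toSpanSingleton ℝ s := rfl
  rw [hcomp, iteratedDeriv_eq_iteratedFDeriv,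
    ContinuousLinearMap.iteratedFDeriv_comp_right _ hshift t hi]
  simp [iteratedFDeriv_comp_add_left]

theorem abs_sub_taylor_le_of_lipschitz_iteratedFDeriv {f : E → ℝ} {m : ℕ} {K : ℝ} (hK : 0 ≤ K)
    (hf : ContDiff ℝ (m + 1) f)
    (hLip : ∀ u v, ‖iteratedFDeriv ℝ (m + 1) f u - iteratedFDeriv ℝ (m + 1) f v‖ ≤ K * ‖u - v‖)
    (x s : E) :
    |f (x + s) - ∑ i ∈ range (m + 2), (1 / i ! : ℝ) * iteratedFDeriv ℝ i f x (fun _ => s)|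
      ≤ K * ‖s‖ ^ (m + 2) / (m + 1)! := by
  set g : ℝ → ℝ := fun t => f (x + t • s)
  have hg : ContDiff ℝ (m + 1) g :=
    hf.comp (contDiff_const.add (contDiff_id.smul contDiff_const))
  have hderiv (i : ℕ) (hi : i ≤ m + 1) (t : ℝ) :
      iteratedDeriv i g t = iteratedFDeriv ℝ i f (x + t • s) (fun _ => s) :=
    iteratedDeriv_comp_add_smul hf x s (by exact_mod_cast hi) t
  have hsum : ∑ i ∈ range (m + 2), (1 / i ! : ℝ) * iteratedFDeriv ℝ i f x (fun _ => s)
      = ∑ i ∈ range (m + 2), iteratedDeriv i g 0 / i ! := by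
    refine sum_congr rfl fun i hi => ?_
    rw [hderiv i (Nat.lt_succ_iff.mp (mem_range.mp hi)), zero_smul, add_zero]
    ring
  have hg1 : g 1 = f (x + s) := by simp [g]
  rw [hsum, ← hg1]
  refine abs_sub_taylor_le_of_abs_iteratedDeriv_sub_le hg fun t ht => ?_
  rw [hderiv _ le_rfl, hderiv _ le_rfl, zero_smul, add_zero, ← Real.norm_eq_abs,
    ← sub_apply (iteratedFDeriv ℝ (m + 1) f (x + t • s))]
  have hdist : ‖x + t • s - x‖ ≤ ‖s‖ := by
    rw [add_sub_cancel_left, norm_smul, Real.norm_of_nonneg ht.1.le]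
    exact mul_le_of_le_one_left (norm_nonneg s) ht.2.le
  calc ‖(iteratedFDeriv ℝ (m + 1) f (x + t • s) - iteratedFDeriv ℝ (m + 1) f x) (fun _ => s)‖
      ≤ ‖iteratedFDeriv ℝ (m + 1) f (x + t • s) - iteratedFDeriv ℝ (m + 1) f x‖ * ‖s‖ ^ (m + 1) :=
        ContinuousMultilinearMap.le_opNorm_mul_pow_of_le _ (pi_norm_const_le s)
    _ ≤ K * ‖s‖ * ‖s‖ ^ (m + 1) := by
        gcongr
        exact (hLip _ _).trans (mul_le_mul_of_nonneg_left hdist hK)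
    _ = K * ‖s‖ ^ (m + 2) := by ring

end

theorem taylorPoly_zero {n : ℕ} (q : ℕ) (f : EuclideanSpace ℝ (Fin n) → ℝ)
    (x : EuclideanSpace ℝ (Fin n)) : taylorPoly q f x 0 = f x := by
  rw [taylorPoly, sum_eq_single 0 ?_ (fun h => absurd (mem_range.mpr (succ_pos q)) h)]
  · simp
  · intro i _ hi
    have : Nonempty (Fin i) := ⟨⟨0, Nat.pos_of_ne_zero hi⟩⟩
    rw [← Pi.zero_def, ContinuousMultilinearMap.map_zero, mul_zero]

theorem taylor_model_ratio_bound {n : ℕ} (q : ℕ) (hq : 1 ≤ q) (Lh : ℝ)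
    (f : EuclideanSpace ℝ (Fin n) → ℝ) (hf : ContDiff ℝ q f)
    (hLip : ∀ x y : EuclideanSpace ℝ (Fin n),
      ‖iteratedFDeriv ℝ q f x - iteratedFDeriv ℝ q f y‖ ≤
        (Nat.factorial (q - 1) : ℝ) * Lh * ‖x - y‖)
    (x s : EuclideanSpace ℝ (Fin n)) (hs : s ≠ 0) (lam : ℝ) (hlam : 0 < lam)
    (hdec : taylorPoly q f x 0 - taylorPoly q f x s ≥ lam / (q + 1) * ‖s‖ ^ (q + 1)) :
    |1 - (f x - f (x + s)) / (taylorPoly q f x 0 - taylorPoly q f x s)| ≤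
      (q + 1) * Lh / (q * lam) := by
  obtain ⟨m, rfl⟩ : ∃ m, q = m + 1 := ⟨q - 1, (Nat.succ_pred_eq_of_pos hq).symm⟩
  simp only [add_tsub_cancel_right] at hLip
  have hs' : 0 < ‖s‖ := norm_pos_iff.mpr hs
  have hK : 0 ≤ (m ! : ℝ) * Lh := by
    have h := hLip (x + s) x
    rw [add_sub_cancel_left] at h
    exact nonneg_of_mul_nonneg_left ((norm_nonneg _).trans h) hs'
  have hrem : |f (x + s) - taylorPoly (m + 1) f x s| ≤ m ! * Lh * ‖s‖ ^ (m + 2) / (m + 1)! :=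
    abs_sub_taylor_le_of_lipschitz_iteratedFDeriv hK hf hLip x s
  have hdec_pos : 0 < taylorPoly (m + 1) f x 0 - taylorPoly (m + 1) f x s :=
    lt_of_lt_of_le (by positivity) hdec
  rw [taylorPoly_zero] at hdec hdec_pos ⊢
  calc |1 - (f x - f (x + s)) / (f x - taylorPoly (m + 1) f x s)|
      = |f (x + s) - taylorPoly (m + 1) f x s| / (f x - taylorPoly (m + 1) f x s) := by
        rw [one_sub_div hdec_pos.ne', abs_div, abs_of_pos hdec_pos]
        ring_nf
    _ ≤ (m ! * Lh * ‖s‖ ^ (m + 2) / (m + 1)!) / (lam / (↑(m + 1) + 1) * ‖s‖ ^ (m + 1 + 1)) :=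
        div_le_div₀ (by positivity) hrem (by positivity) hdec
    _ = (↑(m + 1) + 1) * Lh / (↑(m + 1) * lam) := by
        rw [factorial_succ]
        push_cast
        field_simp
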